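/- arXiv:2404.12054 — 2 statements merged into one kernel-verified Lean document; each statement's English description precedes it below -/
import Mathlib

section
/- Let X be a metric space, let (ε_k) be a sequence of positive real numbers converging to 0, and let F_k, F_0 : X → EReal for k ∈ ℕ. Assume F_k Γ-converges to F_0 with respect to the strong topology of X, that m_0 := inf_X F_0 is a (finite) real number, and that the rescaled functionals δF_k(x) := (F_k(x) − m_0)/ε_k Γ-converge, with respect to the strong topology of X, to a functional F¹ : X → EReal. Let (x_k) be a sequence with F_k(x_k) = inf_X F_k for every k, converging to some x̄ ∈ X. Then: (i) F_0(x̄) = m_0; (ii) F¹(x̄) = inf_X F¹ = lim_{k→∞} (F_k(x_k) − m_0)/ε_k; (iii) if moreover F¹(x̄) is a real number, then F_k(x_k) = m_0 + ε_k F¹(x̄) + o(ε_k) as k → ∞. -/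
open Filter Topology Asymptotics

/-- First-order asymptotic development by Γ-convergence: if `F k` Γ-converges to
`F0`, `m0 = inf F0` is finite, and the rescaled functionals
`δF k x = (F k x - m0) / ε k` Γ-converge to `F1`, then for any sequence of
minimizers `x k` of `F k` converging to `x̄` we have `F0 x̄ = m0`,
`F1 x̄ = inf F1 = lim (F k (x k) - m0) / ε k`, and, if `F1 x̄` is a real number `c`,
`F k (x k) = m0 + ε k * c + o(ε k)`. -/
theorem first_order_asymptotic_development
    {X : Type*} [MetricSpace X]
    (ε : ℕ → ℝ) (hεpos : ∀ k, 0 < ε k) (hε0 : Tendsto ε atTop (𝓝 0))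
    (F : ℕ → X → EReal) (F0 : X → EReal)
    (hliminf : ∀ x : X, ∀ xk : ℕ → X, Tendsto xk atTop (𝓝 x) →
      F0 x ≤ Filter.liminf (fun k => F k (xk k)) atTop)
    (hlimsup : ∀ x : X, ∃ xk : ℕ → X, Tendsto xk atTop (𝓝 x) ∧
      Filter.limsup (fun k => F k (xk k)) atTop ≤ F0 x)
    (m0 : ℝ) (hm0 : (m0 : EReal) = ⨅ y : X, F0 y)
    (F1 : X → EReal)
    (hliminf1 : ∀ x : X, ∀ xk : ℕ → X, Tendsto xk atTop (𝓝 x) →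
      F1 x ≤ Filter.liminf (fun k => (F k (xk k) - (m0 : EReal)) / (ε k : EReal)) atTop)
    (hlimsup1 : ∀ x : X, ∃ xk : ℕ → X, Tendsto xk atTop (𝓝 x) ∧
      Filter.limsup (fun k => (F k (xk k) - (m0 : EReal)) / (ε k : EReal)) atTop ≤ F1 x)
    (x : ℕ → X) (hmin : ∀ k, F k (x k) = ⨅ y : X, F k y)
    (xbar : X) (hconv : Tendsto x atTop (𝓝 xbar)) :
    F0 xbar = (m0 : EReal) ∧
    (F1 xbar = (⨅ y : X, F1 y) ∧
      Tendsto (fun k => (F k (x k) - (m0 : EReal)) / (ε k : EReal)) atTop (𝓝 (F1 xbar))) ∧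
    (∀ c : ℝ, F1 xbar = (c : EReal) →
      (fun k => (F k (x k)).toReal - (m0 + ε k * c)) =o[atTop] ε) := by
  -- x k is a minimizer of F k
  have hne : ∀ k (y : X), F k (x k) ≤ F k y := fun k y => (hmin k) ▸ iInf_le _ y
  -- hence also of the rescaled functional
  have hδne : ∀ k (y : X),
      (F k (x k) - (m0 : EReal)) / (ε k : EReal) ≤ (F k y - (m0 : EReal)) / (ε k : EReal) := by
    intro k y
    apply EReal.div_le_div_right_of_nonneg (le_of_lt (by exact_mod_cast hεpos k))
    exact EReal.sub_le_sub (hne k y) le_rfl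
  -- Part (i)
  have h1 : F0 xbar ≤ (m0 : EReal) := by
    rw [hm0]
    refine le_iInf fun y => ?_
    obtain ⟨yk, hyk, hys⟩ := hlimsup y
    calc F0 xbar ≤ liminf (fun k => F k (x k)) atTop := hliminf xbar x hconv
      _ ≤ liminf (fun k => F k (yk k)) atTop :=
          liminf_le_liminf (Eventually.of_forall fun k => hne k (yk k))
      _ ≤ limsup (fun k => F k (yk k)) atTop := liminf_le_limsup
      _ ≤ F0 y := hys
  have hi : F0 xbar = (m0 : EReal) := le_antisymm h1 (hm0 ▸ iInf_le _ xbar)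
  -- Part (ii)
  have hA : F1 xbar ≤ liminf (fun k => (F k (x k) - (m0 : EReal)) / (ε k : EReal)) atTop :=
    hliminf1 xbar x hconv
  have hB : limsup (fun k => (F k (x k) - (m0 : EReal)) / (ε k : EReal)) atTop
      ≤ ⨅ y : X, F1 y := by
    refine le_iInf fun y => ?_
    obtain ⟨yk, hyk, hys⟩ := hlimsup1 y
    calc limsup (fun k => (F k (x k) - (m0 : EReal)) / (ε k : EReal)) atTop
        ≤ limsup (fun k => (F k (yk k) - (m0 : EReal)) / (ε k : EReal)) atTop :=
          limsup_le_limsup (Eventually.of_forall fun k => hδne k (yk k))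
      _ ≤ F1 y := hys
  have hii1 : F1 xbar = ⨅ y : X, F1 y :=
    le_antisymm (hA.trans (le_trans liminf_le_limsup hB)) (iInf_le _ xbar)
  have hii2 : Tendsto (fun k => (F k (x k) - (m0 : EReal)) / (ε k : EReal)) atTop
      (𝓝 (F1 xbar)) :=
    tendsto_of_le_liminf_of_limsup_le hA (hB.trans (hii1 ▸ le_rfl))
  refine ⟨hi, ⟨hii1, hii2⟩, ?_⟩
  -- Part (iii)
  intro c hc
  have ht : Tendsto (fun k => (F k (x k) - (m0 : EReal)) / (ε k : EReal)) atTop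
      (𝓝 (c : EReal)) := hc ▸ hii2
  have hεne : ∀ k, ((ε k : EReal)) ≠ ⊤ := fun k => EReal.coe_ne_top _
  have hεposE : ∀ k, (0 : EReal) < (ε k : EReal) := fun k => by exact_mod_cast hεpos k
  -- eventually F k (x k) is a finite real
  have hfin : ∀ᶠ k in atTop, ∃ r : ℝ, F k (x k) = (r : EReal) := by
    have h1 : ∀ᶠ k in atTop, (F k (x k) - (m0 : EReal)) / (ε k : EReal) < ⊤ :=
      ht.eventually_lt_const (by exact_mod_cast lt_top_iff_ne_top.2 (EReal.coe_ne_top c))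
    have h2 : ∀ᶠ k in atTop, (⊥ : EReal) < (F k (x k) - (m0 : EReal)) / (ε k : EReal) :=
      ht.eventually_const_lt (by exact_mod_cast bot_lt_iff_ne_bot.2 (EReal.coe_ne_bot c))
    filter_upwards [h1, h2] with k hk1 hk2
    have hT : F k (x k) ≠ ⊤ := by
      intro h
      rw [h, EReal.top_sub_coe, EReal.top_div_of_pos_ne_top (hεposE k) (hεne k)] at hk1
      exact lt_irrefl _ hk1
    have hBo : F k (x k) ≠ ⊥ := by
      intro h
      rw [h, EReal.bot_sub, EReal.bot_div_of_pos_ne_top (hεposE k) (hεne k)] at hk2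
      exact lt_irrefl _ hk2
    exact ⟨(F k (x k)).toReal, (EReal.coe_toReal hT hBo).symm⟩
  -- the real-valued quotient converges to c
  have hreal : Tendsto (fun k => ((F k (x k)).toReal - m0) / ε k) atTop (𝓝 c) := by
    rw [← EReal.tendsto_coe]
    apply ht.congr'
    filter_upwards [hfin] with k ⟨r, hr⟩
    rw [hr, EReal.toReal_coe, ← EReal.coe_sub, ← EReal.coe_div]
  -- conclude the little-o estimate
  rw [isLittleO_iff_tendsto fun k h => absurd h (ne_of_gt (hεpos k))]
  have : Tendsto (fun k => ((F k (x k)).toReal - m0) / ε k - c) atTop (𝓝 (c - c)) :=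
    hreal.sub tendsto_const_nhds
  rw [sub_self] at this
  apply this.congr
  intro k
  have hk : ε k ≠ 0 := ne_of_gt (hεpos k)
  field_simp
  ring
end

section
/- Let L > 0, let H ∈ ℝ be such that 1 + tH > 0 for every t ∈ [0, L], let λ > 0, and let u : ℝ → ℝ be continuously differentiable on [0, L]. Then ∫₀^L u′(t)² (1 + tH) dt ≥ (1 − λ)(1 + LH) u(L)²/L + (1/L)(1 − 1/λ) ( u(0) + (H/2) ∫₀^L u(t)/√(1 + tH) dt )². -/
/-!
Write `w t = √(1 + tH)`, so that the energy is `∫₀^L (w u')²`. Cauchy–Schwarz bounds it below by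
`(∫₀^L w u')² / L`, and integrating by parts against `w` (with `w' = H / (2w)`, `w 0 = 1`) gives
`∫₀^L w u' = X − Y` with `X = w(L) u(L)` and `Y = u(0) + (H/2) ∫₀^L u / w`. The Young-type
inequality `(X − Y)² ≥ (1 − λ) X² + (1 − 1/λ) Y²` and `X² = (1 + LH) u(L)²` finish the proof.
-/

open Set intervalIntegral
open MeasureTheory (volume)

theorem sq_intervalIntegral_le_mul_integral_sq {f : ℝ → ℝ} {a b : ℝ} (hab : a ≤ b)
    (hf : IntervalIntegrable f volume a b)
    (hf2 : IntervalIntegrable (fun x => f x ^ 2) volume a b) :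
    (∫ x in a..b, f x) ^ 2 ≤ (b - a) * ∫ x in a..b, f x ^ 2 := by
  set I := ∫ x in a..b, f x
  have hexpand : ∫ x in a..b, ((b - a) * f x - I) ^ 2
      = (b - a) * ((b - a) * (∫ x in a..b, f x ^ 2) - I ^ 2) := by
    have hpoly : ∀ x, ((b - a) * f x - I) ^ 2
        = (b - a) ^ 2 * f x ^ 2 - 2 * (b - a) * I * f x + I ^ 2 := fun x => by ring
    simp_rw [hpoly]
    rw [integral_add ((hf2.const_mul _).sub (hf.const_mul _)) intervalIntegrable_const,
      integral_sub (hf2.const_mul _) (hf.const_mul _), integral_const_mul, integral_const_mul,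
      integral_const, smul_eq_mul]
    ring
  rcases hab.eq_or_lt with rfl | hlt
  · simp [I]
  · have hnonneg := hexpand ▸ integral_nonneg hab fun x _ => sq_nonneg ((b - a) * f x - I)
    linarith [(mul_nonneg_iff_of_pos_left (sub_pos.2 hlt)).1 hnonneg]

theorem one_sub_mul_sq_add_one_sub_inv_mul_sq_le {lam : ℝ} (hlam : 0 < lam) (x y : ℝ) :
    (1 - lam) * x ^ 2 + (1 - 1 / lam) * y ^ 2 ≤ (x - y) ^ 2 := by
  have hdefect : (x - y) ^ 2 - ((1 - lam) * x ^ 2 + (1 - 1 / lam) * y ^ 2)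
      = (lam * x - y) ^ 2 / lam := by
    field_simp
    ring
  have : 0 ≤ (lam * x - y) ^ 2 / lam := by positivity
  linarith

theorem hasDerivAt_sqrt_one_add_mul {H t : ℝ} (ht : 0 < 1 + t * H) :
    HasDerivAt (fun s => √(1 + s * H)) (H / (2 * √(1 + t * H))) t := by
  simpa using (((hasDerivAt_id t).mul_const H).const_add 1).sqrt ht.ne'

theorem integral_sqrt_one_add_mul_mul_deriv {u u' : ℝ → ℝ} {a b H : ℝ}
    (hH : ∀ t ∈ uIcc a b, 0 < 1 + t * H) (hu : ∀ t ∈ uIcc a b, HasDerivAt u (u' t) t)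
    (hu' : IntervalIntegrable u' volume a b) :
    ∫ t in a..b, √(1 + t * H) * u' t
      = √(1 + b * H) * u b - √(1 + a * H) * u a - H / 2 * ∫ t in a..b, u t / √(1 + t * H) := by
  have hw' : ContinuousOn (fun t => H / (2 * √(1 + t * H))) (uIcc a b) :=
    ContinuousOn.div (by fun_prop) (by fun_prop) fun t ht => by positivity [hH t ht]
  rw [integral_mul_deriv_eq_deriv_mul (fun t ht => hasDerivAt_sqrt_one_add_mul (hH t ht)) hu
    hw'.intervalIntegrable hu', ← integral_const_mul]
  congr 1
  exact integral_congr fun t _ => by ring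

/-- Ray-wise lower bound for the weighted Dirichlet energy: if `1 + tH > 0` on
`[0, L]`, `λ > 0` and `u` is continuously differentiable on `[0, L]`, then
`∫₀^L u′(t)² (1+tH) dt ≥ (1−λ)(1+LH) u(L)²/L
+ (1/L)(1−1/λ)(u(0) + (H/2)∫₀^L u(t)/√(1+tH) dt)²`. -/
theorem raywise_liminf_inequality
    (L : ℝ) (hL : 0 < L) (H : ℝ) (hH : ∀ t ∈ Set.Icc (0 : ℝ) L, 0 < 1 + t * H)
    (lam : ℝ) (hlam : 0 < lam)
    (u u' : ℝ → ℝ)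
    (hderiv : ∀ t ∈ Set.Icc (0 : ℝ) L, HasDerivAt u (u' t) t)
    (hcont : ContinuousOn u' (Set.Icc (0 : ℝ) L)) :
    ∫ t in (0 : ℝ)..L, (u' t) ^ 2 * (1 + t * H) ≥
      (1 - lam) * (1 + L * H) * (u L) ^ 2 / L
        + (1 / L) * (1 - 1 / lam) *
          (u 0 + (H / 2) * ∫ t in (0 : ℝ)..L, u t / Real.sqrt (1 + t * H)) ^ 2 := by
  rw [← uIcc_of_le hL.le] at hH hderiv hcont
  set X := √(1 + L * H) * u L
  set Y := u 0 + (H / 2) * ∫ t in (0 : ℝ)..L, u t / √(1 + t * H)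
  have hX : X ^ 2 = (1 + L * H) * u L ^ 2 := by
    rw [mul_pow, Real.sq_sqrt (hH L right_mem_uIcc).le]
  have hparts : ∫ t in (0 : ℝ)..L, √(1 + t * H) * u' t = X - Y := by
    rw [integral_sqrt_one_add_mul_mul_deriv hH hderiv hcont.intervalIntegrable]
    simp only [X, Y, zero_mul, add_zero, Real.sqrt_one, one_mul]
    ring
  have hweight : ∫ t in (0 : ℝ)..L, u' t ^ 2 * (1 + t * H)
      = ∫ t in (0 : ℝ)..L, (√(1 + t * H) * u' t) ^ 2 :=
    integral_congr fun t ht => by rw [mul_pow, Real.sq_sqrt (hH t ht).le, mul_comm]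
  have hwu' : ContinuousOn (fun t => √(1 + t * H) * u' t) (uIcc 0 L) := by fun_prop
  rw [ge_iff_le, hweight]
  calc _ = ((1 - lam) * X ^ 2 + (1 - 1 / lam) * Y ^ 2) / L := by rw [hX]; field_simp
    _ ≤ (X - Y) ^ 2 / L := by gcongr; exact one_sub_mul_sq_add_one_sub_inv_mul_sq_le hlam X Y
    _ ≤ _ := by
      rw [← hparts, div_le_iff₀ hL, mul_comm]
      simpa using sq_intervalIntegral_le_mul_integral_sq hL.le hwu'.intervalIntegrable
        (hwu'.pow 2).intervalIntegrable
end
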